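/- arXiv:1805.01626 — 3 statements merged into one kernel-verified Lean document; each statement's English description precedes it below -/
import Mathlib

section
/- For every integer k ≥ 2 there exists a polynomial p of degree at most k with p(0)=0 and p'(0)=0 (no linear or constant terms) such that |p(x) − x| ≤ 2/(k(k+1)) for all x ∈ [0,1]. -/
/-!
The polynomial `x ↦ T_n(1 - 2x)` is bounded by `1` in absolute value on `[0, 1]`, takes the value
`1` at `0` and has slope `-2 T_n'(1) = -2n²` there. Hence
`p(x) = x + (T_n(1 - 2x) - 1) / (2n²)` has no constant or linear term, and
`|p(x) - x| ≤ 2 / (2n²) = 1 / n² ≤ 2 / (n(n + 1))` on `[0, 1]`.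
-/

open Polynomial Polynomial.Chebyshev

section CommRing

variable {R : Type*} [CommRing R]

theorem coeff_one_eq_eval_derivative_zero (p : R[X]) : p.coeff 1 = (derivative p).eval 0 := by
  simp [← coeff_zero_eq_eval_zero, coeff_derivative]

theorem coeff_zero_T_comp_one_sub_two_mul_X (n : ℤ) :
    ((T R n).comp (1 - 2 * X)).coeff 0 = 1 := by
  simp [coeff_zero_eq_eval_zero, T_eval_one]

theorem coeff_one_T_comp_one_sub_two_mul_X (n : ℤ) :
    ((T R n).comp (1 - 2 * X)).coeff 1 = -2 * n ^ 2 := by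
  simp [coeff_one_eq_eval_derivative_zero, derivative_comp, derivative_T_eval_one]

theorem natDegree_T_comp_one_sub_two_mul_X_le [IsDomain R] [NeZero (2 : R)] (n : ℕ) :
    ((T R n).comp (1 - 2 * X)).natDegree ≤ n := by
  have hlin : (1 - 2 * X : R[X]).natDegree ≤ 1 := by compute_degree
  calc ((T R n).comp (1 - 2 * X)).natDegree ≤ (T R n).natDegree * (1 - 2 * X : R[X]).natDegree :=
        natDegree_comp_le
    _ ≤ n * 1 := Nat.mul_le_mul (by simp [natDegree_T]) hlin
    _ = n := mul_one n

end CommRing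

theorem abs_eval_T_comp_one_sub_two_mul_X_le_one (n : ℤ) {x : ℝ} (hx : x ∈ Set.Icc (0 : ℝ) 1) :
    |((T ℝ n).comp (1 - 2 * X)).eval x| ≤ 1 := by
  rw [eval_comp]
  refine abs_eval_T_real_le_one n ?_
  simp only [eval_sub, eval_one, eval_mul, eval_ofNat, eval_X]
  exact abs_le.mpr ⟨by linarith [hx.2], by linarith [hx.1]⟩

noncomputable def chebyshevIdApprox (n : ℕ) : ℝ[X] :=
  X + C (2 * (n : ℝ) ^ 2)⁻¹ * ((T ℝ n).comp (1 - 2 * X) - 1)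

theorem natDegree_chebyshevIdApprox_le {n : ℕ} (hn : 1 ≤ n) :
    (chebyshevIdApprox n).natDegree ≤ n := by
  refine (natDegree_add_le _ _).trans (max_le (natDegree_X_le.trans hn) ?_)
  refine (natDegree_C_mul_le _ _).trans ((natDegree_sub_le _ _).trans (max_le ?_ (by simp)))
  exact natDegree_T_comp_one_sub_two_mul_X_le n

theorem coeff_zero_chebyshevIdApprox (n : ℕ) : (chebyshevIdApprox n).coeff 0 = 0 := by
  simp [chebyshevIdApprox, coeff_zero_T_comp_one_sub_two_mul_X]

theorem coeff_one_chebyshevIdApprox {n : ℕ} (hn : n ≠ 0) : (chebyshevIdApprox n).coeff 1 = 0 := by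
  rw [chebyshevIdApprox, coeff_add, coeff_X_one, coeff_C_mul, coeff_sub, coeff_one,
    coeff_one_T_comp_one_sub_two_mul_X]
  simp only [one_ne_zero, if_false, sub_zero, Int.cast_natCast]
  field_simp
  ring

theorem abs_eval_chebyshevIdApprox_sub_le (n : ℕ) {x : ℝ} (hx : x ∈ Set.Icc (0 : ℝ) 1) :
    |(chebyshevIdApprox n).eval x - x| ≤ ((n : ℝ) ^ 2)⁻¹ := by
  have hT := abs_eval_T_comp_one_sub_two_mul_X_le_one n hx
  have hdiff : |((T ℝ n).comp (1 - 2 * X)).eval x - 1| ≤ 2 :=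
    (abs_sub _ _).trans (by rw [abs_one]; linarith)
  calc |(chebyshevIdApprox n).eval x - x|
      = (2 * (n : ℝ) ^ 2)⁻¹ * |((T ℝ n).comp (1 - 2 * X)).eval x - 1| := by
        simp only [chebyshevIdApprox, eval_add, eval_X, eval_mul, eval_C, eval_sub, eval_one,
          add_sub_cancel_left, abs_mul]
        rw [abs_of_nonneg (by positivity)]
    _ ≤ (2 * (n : ℝ) ^ 2)⁻¹ * 2 := by gcongr
    _ = ((n : ℝ) ^ 2)⁻¹ := by
        rw [mul_inv, mul_comm, ← mul_assoc, mul_inv_cancel₀ two_ne_zero, one_mul]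

/-- For every integer `k ≥ 2` there exists a polynomial of degree at most `k`
with no constant or linear term approximating `x` on `[0,1]` within `2/(k(k+1))`. -/
theorem exists_poly_approx_id_unit_interval (k : ℕ) (hk : 2 ≤ k) :
    ∃ p : Polynomial ℝ, p.natDegree ≤ k ∧ p.coeff 0 = 0 ∧ p.coeff 1 = 0 ∧
      ∀ x ∈ Set.Icc (0 : ℝ) 1, |p.eval x - x| ≤ 2 / ((k : ℝ) * (k + 1)) := by
  refine ⟨chebyshevIdApprox k, natDegree_chebyshevIdApprox_le (by omega),
    coeff_zero_chebyshevIdApprox k, coeff_one_chebyshevIdApprox (by omega), fun x hx => ?_⟩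
  refine (abs_eval_chebyshevIdApprox_sub_le k hx).trans ?_
  have hk' : (2 : ℝ) ≤ k := by exact_mod_cast hk
  rw [inv_eq_one_div, div_le_div_iff₀ (by positivity) (by positivity)]
  nlinarith
end

section
/- For every integer k ≥ 2 and every b with 0 < b ≤ 1, there exists a polynomial p of degree at most k with no linear or constant terms such that |p(x) − x| ≤ 2·e^{−(k−1)√b} for all x ∈ [b,1]. -/
/-!
Put `p(x) = x (1 - q(x) / q(0))` with `q = T_{k-1} ∘ L`, where `L` is the affine map sending
`[b, 1]` onto `[-1, 1]`. Then `p` has no constant or linear term, and `|p(x) - x| ≤ 1 / q(0)` on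
`[b, 1]` because Chebyshev polynomials are bounded by `1` on `[-1, 1]`. Outside `[-1, 1]` they grow
exponentially: `L(0) = (1 + b) / (1 - b) = cosh (2 artanh √b)`, so
`q(0) = cosh (2 (k - 1) artanh √b) ≥ exp ((k - 1) √b) / 2`.
-/

open Polynomial Real Set

section IdApprox

variable {K : Type*} [Field K]

noncomputable def idApprox (q : K[X]) : K[X] := X * (1 - C (q.eval 0)⁻¹ * q)

@[simp]
lemma coeff_idApprox_zero (q : K[X]) : (idApprox q).coeff 0 = 0 := by
  simp [idApprox]

lemma coeff_idApprox_one {q : K[X]} (hq : q.eval 0 ≠ 0) : (idApprox q).coeff 1 = 0 := by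
  rw [idApprox, coeff_X_mul, coeff_sub, coeff_one_zero, coeff_C_mul, coeff_zero_eq_eval_zero,
    inv_mul_cancel₀ hq, sub_self]

lemma natDegree_idApprox_le (q : K[X]) : (idApprox q).natDegree ≤ q.natDegree + 1 := by
  have h : (1 - C (q.eval 0)⁻¹ * q).natDegree ≤ q.natDegree :=
    (natDegree_sub_le _ _).trans (max_le (by simp) (natDegree_C_mul_le _ _))
  rw [idApprox]
  exact natDegree_mul_le.trans (by rw [natDegree_X]; omega)

lemma eval_idApprox_sub (q : K[X]) (x : K) :
    (idApprox q).eval x - x = -(x * q.eval x / q.eval 0) := by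
  simp only [idApprox, eval_mul, eval_X, eval_sub, eval_one, eval_C]
  ring

lemma abs_eval_idApprox_sub_le [LinearOrder K] [IsStrictOrderedRing K] {q : K[X]} {x : K}
    (hx : |x| ≤ 1) (hqx : |q.eval x| ≤ 1) :
    |(idApprox q).eval x - x| ≤ |q.eval 0|⁻¹ := by
  rw [eval_idApprox_sub, abs_neg, abs_div, abs_mul, inv_eq_one_div]
  gcongr
  exact mul_le_one₀ hx (abs_nonneg _) hqx

end IdApprox

section ToUnitIcc

variable {K : Type*} [Field K]

noncomputable def toUnitIcc (a c : K) : K[X] := C ((a + c) / (c - a)) - C (2 / (c - a)) * X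

lemma eval_toUnitIcc (a c x : K) : (toUnitIcc a c).eval x = (a + c - 2 * x) / (c - a) := by
  simp only [toUnitIcc, eval_sub, eval_mul, eval_C, eval_X]
  ring

lemma natDegree_toUnitIcc_le (a c : K) : (toUnitIcc a c).natDegree ≤ 1 :=
  (natDegree_sub_le _ _).trans (max_le (by simp) ((natDegree_C_mul_le _ _).trans natDegree_X_le))

lemma eval_toUnitIcc_mem_Icc [LinearOrder K] [IsStrictOrderedRing K] {a c x : K} (hac : a < c)
    (hx : x ∈ Icc a c) : (toUnitIcc a c).eval x ∈ Icc (-1) 1 := by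
  have hca : 0 < c - a := sub_pos.2 hac
  rw [eval_toUnitIcc, mem_Icc, le_div_iff₀ hca, div_le_iff₀ hca]
  constructor <;> linarith [hx.1, hx.2]

end ToUnitIcc

lemma natDegree_T_comp_le {R : Type*} [CommRing R] [IsDomain R] [NeZero (2 : R)] (n : ℕ)
    {L : R[X]} (hL : L.natDegree ≤ 1) : ((Chebyshev.T R n).comp L).natDegree ≤ n := by
  refine natDegree_comp_le.trans ?_
  simpa [Chebyshev.natDegree_T] using Nat.mul_le_mul_left n hL

lemma cosh_two_mul_artanh {s : ℝ} (hs : s ∈ Ioo (-1) 1) :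
    cosh (2 * artanh s) = (1 + s ^ 2) / (1 - s ^ 2) := by
  have h : 0 < 1 - s ^ 2 := by nlinarith [hs.1, hs.2]
  rw [cosh_two_mul, cosh_artanh hs, sinh_artanh hs, div_pow, div_pow, one_pow, sq_sqrt h.le]
  field_simp

lemma le_two_mul_artanh {s : ℝ} (h0 : 0 ≤ s) (h1 : s < 1) : s ≤ 2 * artanh s := by
  have hs : s ∈ Ioo (-1) 1 := ⟨by linarith, h1⟩
  have h1s : 0 < 1 - s := sub_pos.2 h1
  rw [← exp_le_exp, mul_comm, exp_mul, exp_artanh hs, rpow_two, sq_sqrt (by positivity)]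
  calc exp s ≤ 1 / (1 - s) := exp_bound_div_one_sub_of_interval h0 h1
    _ ≤ (1 + s) / (1 - s) := by gcongr; linarith

lemma exp_le_two_mul_eval_T (n : ℕ) {s : ℝ} (h0 : 0 ≤ s) (h1 : s < 1) :
    exp (n * s) ≤ 2 * (Chebyshev.T ℝ n).eval ((1 + s ^ 2) / (1 - s ^ 2)) := by
  rw [← cosh_two_mul_artanh ⟨by linarith, h1⟩, Chebyshev.T_real_cosh, cosh_eq, Int.cast_natCast]
  calc exp (n * s) ≤ exp (n * (2 * artanh s)) := by gcongr; exact le_two_mul_artanh h0 h1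
    _ ≤ _ := by linarith [exp_pos (-(n * (2 * artanh s)))]

theorem exists_poly_approx_id_interval_general (k : ℕ) (hk : 2 ≤ k) (b : ℝ) (hb0 : 0 < b) :
    ∃ p : Polynomial ℝ, p.natDegree ≤ k ∧ p.coeff 0 = 0 ∧ p.coeff 1 = 0 ∧
      ∀ x ∈ Set.Icc b 1, |p.eval x - x| ≤ 2 * Real.exp (-((k : ℝ) - 1) * Real.sqrt b) := by
  rcases le_or_gt 1 b with hb1 | hb1
  · refine ⟨X ^ 2, (natDegree_X_pow_le 2).trans hk, by simp, by simp, fun x hx => ?_⟩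
    obtain rfl : x = 1 := le_antisymm hx.2 (hb1.trans hx.1)
    simp only [eval_pow, eval_X, one_pow, sub_self, abs_zero]
    positivity
  set n := k - 1
  have hn : (n : ℝ) = k - 1 := by rw [Nat.cast_sub (by omega), Nat.cast_one]
  set q := (Chebyshev.T ℝ n).comp (toUnitIcc b 1)
  have hq0 : exp (n * √b) ≤ 2 * q.eval 0 := by
    simpa [q, eval_comp, eval_toUnitIcc, sq_sqrt hb0.le, add_comm] using
      exp_le_two_mul_eval_T n (sqrt_nonneg b) ((sqrt_lt' one_pos).2 (by rwa [one_pow]))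
  have hq0_pos : 0 < q.eval 0 := by linarith [exp_pos (n * √b)]
  have hq_deg : q.natDegree ≤ n := natDegree_T_comp_le n (natDegree_toUnitIcc_le b 1)
  refine ⟨idApprox q, (natDegree_idApprox_le q).trans (by omega), coeff_idApprox_zero q,
    coeff_idApprox_one hq0_pos.ne', fun x hx => ?_⟩
  have hx_abs : |x| ≤ 1 := abs_le.2 ⟨by linarith [hx.1], hx.2⟩
  have hqx : |q.eval x| ≤ 1 := by
    rw [eval_comp]
    exact abs_le.2 (Chebyshev.eval_T_real_mem_Icc _ (eval_toUnitIcc_mem_Icc hb1 hx))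
  calc |(idApprox q).eval x - x| ≤ |q.eval 0|⁻¹ := abs_eval_idApprox_sub_le hx_abs hqx
    _ ≤ 2 * exp (-(n * √b)) := by
      rw [abs_of_pos hq0_pos, exp_neg, ← div_eq_mul_inv, le_div_iff₀ (exp_pos _),
        inv_mul_le_iff₀ hq0_pos]
      linarith
    _ = 2 * exp (-((k : ℝ) - 1) * √b) := by rw [hn, neg_mul]

/-- For every integer `k ≥ 2` and `0 < b ≤ 1`, there exists a polynomial of degree at
most `k` with no constant or linear term approximating `x` on `[b,1]` within
`2·exp(−(k−1)√b)`. -/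
theorem exists_poly_approx_id_interval (k : ℕ) (hk : 2 ≤ k) (b : ℝ) (hb0 : 0 < b)
    (hb1 : b ≤ 1) :
    ∃ p : Polynomial ℝ, p.natDegree ≤ k ∧ p.coeff 0 = 0 ∧ p.coeff 1 = 0 ∧
      ∀ x ∈ Set.Icc b 1, |p.eval x - x| ≤ 2 * Real.exp (-((k : ℝ) - 1) * Real.sqrt b) :=
  exists_poly_approx_id_interval_general k hk b hb0
end

section
/- Let μ₁, μ₂ ∈ R and σ₁, σ₂ > 0 with σ₁² + σ₂² − σ₁²σ₂² > 0. Then the pairwise correlation of N(μ₁,σ₁²) and N(μ₂,σ₂²) relative to N(0,1), defined as ∫ p₁(x)p₂(x)/φ(x) dx − 1 where φ is the standard normal density, equals exp(−(μ₁²(σ₂²−1) + 2μ₁μ₂ + μ₂²(σ₁²−1))/(2σ₁²(σ₂²−1) − 2σ₂²)) / √(σ₁² + σ₂² − σ₁²σ₂²) − 1. -/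
open MeasureTheory Real

/-! The ratio `p₁ p₂ / φ` is the exponential of a quadratic in `x` with leading coefficient
`-(σ₁² + σ₂² - σ₁²σ₂²) / (2σ₁²σ₂²)`, which is negative exactly under the hypothesis, so the
integral is a Gaussian integral, evaluated by completing the square. -/

theorem integral_exp_neg_mul_sq_add_mul_add {a : ℝ} (ha : a ≠ 0) (b c : ℝ) :
    ∫ x : ℝ, exp (-a * x ^ 2 + b * x + c) = √(π / a) * exp (c + b ^ 2 / (4 * a)) := by
  have complete_square : ∀ x : ℝ,
      -a * x ^ 2 + b * x + c = -a * (x - b / (2 * a)) ^ 2 + (c + b ^ 2 / (4 * a)) := by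
    intro x; field_simp; ring
  simp_rw [complete_square, exp_add, integral_mul_const]
  rw [integral_sub_right_eq_self (fun x => exp (-a * x ^ 2)), integral_gaussian]

theorem sqrt_two_pi_mul_sq {σ : ℝ} (hσ : 0 ≤ σ) : √(2 * π * σ ^ 2) = √(2 * π) * σ := by
  rw [sqrt_mul (by positivity), sqrt_sq hσ]

theorem normal_density_mul_div_standard_eq_exp_quadratic {σ₁ σ₂ : ℝ} (hσ₁ : 0 < σ₁)
    (hσ₂ : 0 < σ₂) (μ₁ μ₂ x : ℝ) :
    exp (-(x - μ₁) ^ 2 / (2 * σ₁ ^ 2)) / √(2 * π * σ₁ ^ 2) *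
        (exp (-(x - μ₂) ^ 2 / (2 * σ₂ ^ 2)) / √(2 * π * σ₂ ^ 2)) /
        (exp (-x ^ 2 / 2) / √(2 * π)) =
      exp (-((1 / σ₁ ^ 2 + 1 / σ₂ ^ 2 - 1) / 2) * x ^ 2 + (μ₁ / σ₁ ^ 2 + μ₂ / σ₂ ^ 2) * x
        + -(μ₁ ^ 2 / σ₁ ^ 2 + μ₂ ^ 2 / σ₂ ^ 2) / 2) / (√(2 * π) * σ₁ * σ₂) := by
  have exponent : -(x - μ₁) ^ 2 / (2 * σ₁ ^ 2) + -(x - μ₂) ^ 2 / (2 * σ₂ ^ 2) - -x ^ 2 / 2 =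
      -((1 / σ₁ ^ 2 + 1 / σ₂ ^ 2 - 1) / 2) * x ^ 2 + (μ₁ / σ₁ ^ 2 + μ₂ / σ₂ ^ 2) * x
        + -(μ₁ ^ 2 / σ₁ ^ 2 + μ₂ ^ 2 / σ₂ ^ 2) / 2 := by
    field_simp; ring
  rw [← exponent, exp_sub, exp_add, sqrt_two_pi_mul_sq hσ₁.le, sqrt_two_pi_mul_sq hσ₂.le]
  have sqrt_two_pi_ne_zero : √(2 * π) ≠ 0 := by positivity
  field_simp

/-- The pairwise correlation of `N(μ₁,σ₁²)` and `N(μ₂,σ₂²)` relative to `N(0,1)`: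
`∫ p₁(x)p₂(x)/φ(x) dx − 1` has the stated closed form. -/
theorem gaussian_pairwise_correlation (μ₁ μ₂ σ₁ σ₂ : ℝ) (hσ₁ : 0 < σ₁) (hσ₂ : 0 < σ₂)
    (hpos : 0 < σ₁ ^ 2 + σ₂ ^ 2 - σ₁ ^ 2 * σ₂ ^ 2) :
    (∫ x : ℝ,
        (Real.exp (-(x - μ₁) ^ 2 / (2 * σ₁ ^ 2)) / Real.sqrt (2 * Real.pi * σ₁ ^ 2)) *
          (Real.exp (-(x - μ₂) ^ 2 / (2 * σ₂ ^ 2)) / Real.sqrt (2 * Real.pi * σ₂ ^ 2)) /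
          (Real.exp (-x ^ 2 / 2) / Real.sqrt (2 * Real.pi))) - 1 =
      Real.exp (-(μ₁ ^ 2 * (σ₂ ^ 2 - 1) + 2 * μ₁ * μ₂ + μ₂ ^ 2 * (σ₁ ^ 2 - 1)) /
          (2 * σ₁ ^ 2 * (σ₂ ^ 2 - 1) - 2 * σ₂ ^ 2)) /
        Real.sqrt (σ₁ ^ 2 + σ₂ ^ 2 - σ₁ ^ 2 * σ₂ ^ 2) - 1 := by
  set S := σ₁ ^ 2 + σ₂ ^ 2 - σ₁ ^ 2 * σ₂ ^ 2
  have precision : (1 / σ₁ ^ 2 + 1 / σ₂ ^ 2 - 1) / 2 = S / (2 * σ₁ ^ 2 * σ₂ ^ 2) := by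
    field_simp; ring
  simp_rw [normal_density_mul_div_standard_eq_exp_quadratic hσ₁ hσ₂, precision]
  rw [integral_div, integral_exp_neg_mul_sq_add_mul_add (by positivity)]
  have prefactor : √(π / (S / (2 * σ₁ ^ 2 * σ₂ ^ 2))) = √(2 * π) * σ₁ * σ₂ / √S := by
    rw [← sqrt_sq (by positivity : 0 ≤ √(2 * π) * σ₁ * σ₂ / √S)]
    congr 1
    rw [div_pow, mul_pow, mul_pow, sq_sqrt (by positivity), sq_sqrt hpos.le]
    field_simp
  have exponent : -(μ₁ ^ 2 / σ₁ ^ 2 + μ₂ ^ 2 / σ₂ ^ 2) / 2 +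
      (μ₁ / σ₁ ^ 2 + μ₂ / σ₂ ^ 2) ^ 2 / (4 * (S / (2 * σ₁ ^ 2 * σ₂ ^ 2))) =
      -(μ₁ ^ 2 * (σ₂ ^ 2 - 1) + 2 * μ₁ * μ₂ + μ₂ ^ 2 * (σ₁ ^ 2 - 1)) /
          (2 * σ₁ ^ 2 * (σ₂ ^ 2 - 1) - 2 * σ₂ ^ 2) := by
    rw [show 2 * σ₁ ^ 2 * (σ₂ ^ 2 - 1) - 2 * σ₂ ^ 2 = -(2 * S) by ring]
    field_simp
    ring
  rw [prefactor, exponent]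
  have sqrt_two_pi_ne_zero : √(2 * π) ≠ 0 := by positivity
  field_simp
end
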